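/- arXiv:1910.12951 — 7 statements merged into one kernel-verified Lean document; each statement's English description precedes it below -/
import Mathlib

section
/- Let J be a group and let H and K be subgroups of J. Then there is a bijection between the product of left coset spaces (J/H) × (J/K) and the disjoint union, indexed by the double cosets d ∈ H\J/K, of the left coset spaces J/(H ∩ x_d K x_d⁻¹), where x_d is any choice of representative of the double coset d. -/
open MulAction

section Aux

variable {J : Type*} [Group J] (H K : Subgroup J)

/-- The map sending `(aH, bK)` to the double coset `H(a⁻¹b)K`. -/
def dosetOfPair : (J ⧸ H) × (J ⧸ K) → DoubleCoset.Quotient (H : Set J) (K : Set J) :=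
  fun p => Quotient.liftOn₂' p.1 p.2 (fun a b => DoubleCoset.mk H K (a⁻¹ * b))
    (by
      intro a₁ b₁ a₂ b₂ ha hb
      rw [QuotientGroup.leftRel_apply] at ha hb
      refine (DoubleCoset.eq H K _ _).2 ⟨(a₁⁻¹ * a₂)⁻¹, H.inv_mem ha, b₁⁻¹ * b₂, hb, ?_⟩
      group)

theorem dosetOfPair_mk (a b : J) :
    dosetOfPair H K (((a : J ⧸ H)), ((b : J ⧸ K))) = DoubleCoset.mk H K (a⁻¹ * b) := rfl

theorem dosetOfPair_smul (g : J) (p : (J ⧸ H) × (J ⧸ K)) :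
    dosetOfPair H K (g • p) = dosetOfPair H K p := by
  obtain ⟨a, b⟩ := p
  induction a using QuotientGroup.induction_on
  induction b using QuotientGroup.induction_on
  rename_i a b
  show dosetOfPair H K ((↑(g * a), ↑(g * b))) = _
  rw [dosetOfPair_mk, dosetOfPair_mk]
  congr 1
  group

/-- Orbits of the diagonal action on `(J ⧸ H) × (J ⧸ K)` biject with double cosets. -/
noncomputable def orbitsEquivDoset :
    Quotient (orbitRel J ((J ⧸ H) × (J ⧸ K))) ≃ DoubleCoset.Quotient (H : Set J) (K : Set J) := by
  refine Equiv.ofBijective (Quotient.lift (dosetOfPair H K) ?_) ⟨?_, ?_⟩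
  · rintro p q ⟨g, rfl⟩
    exact dosetOfPair_smul H K g q
  · rintro ⟨p⟩ ⟨q⟩ hpq
    obtain ⟨a, b⟩ := p
    obtain ⟨c, d⟩ := q
    induction a using QuotientGroup.induction_on
    induction b using QuotientGroup.induction_on
    induction c using QuotientGroup.induction_on
    induction d using QuotientGroup.induction_on
    rename_i a b c d
    change DoubleCoset.mk H K (a⁻¹ * b) = DoubleCoset.mk H K (c⁻¹ * d) at hpq
    obtain ⟨h, hh, k, hk, hcd⟩ := (DoubleCoset.eq H K _ _).1 hpq
    refine Quotient.sound ⟨a * h⁻¹ * c⁻¹, Prod.ext ?_ ?_⟩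
    · show ((a * h⁻¹ * c⁻¹ * c : J) : J ⧸ H) = (a : J ⧸ H)
      rw [QuotientGroup.eq]
      have : (a * h⁻¹ * c⁻¹ * c)⁻¹ * a = h := by group
      rw [this]; exact hh
    · show ((a * h⁻¹ * c⁻¹ * d : J) : J ⧸ K) = (b : J ⧸ K)
      rw [QuotientGroup.eq]
      have h2 : (a * h⁻¹ * c⁻¹ * d)⁻¹ * b = (a * h⁻¹ * (c⁻¹ * d))⁻¹ * b := by group
      rw [h2, hcd]
      have : (a * h⁻¹ * (h * (a⁻¹ * b) * k))⁻¹ * b = k⁻¹ := by group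
      rw [this]; exact K.inv_mem hk
  · intro d
    induction d using Quotient.inductionOn
    rename_i g
    exact ⟨Quotient.mk'' ((↑(1 : J) : J ⧸ H), (g : J ⧸ K)), by
      simp only [Quotient.lift_mk, dosetOfPair_mk, inv_one, one_mul]⟩

theorem stabilizer_pair (g : J) :
    stabilizer J ((↑(1 : J) : J ⧸ H), ((g : J ⧸ K))) =
      H ⊓ Subgroup.map (MulAut.conj g).toMonoidHom K := by
  ext a
  simp only [mem_stabilizer_iff, Prod.smul_mk, Prod.mk.injEq, Subgroup.mem_inf,
    Subgroup.mem_map, MulEquiv.coe_toMonoidHom, MulAut.conj_apply]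
  constructor
  · rintro ⟨h1, h2⟩
    have h1' : ((a * 1 : J) : J ⧸ H) = ((1 : J) : J ⧸ H) := h1
    have h2' : ((a * g : J) : J ⧸ K) = (g : J ⧸ K) := h2
    rw [QuotientGroup.eq] at h1' h2'
    refine ⟨by simpa using H.inv_mem h1', g⁻¹ * a * g, ?_, by group⟩
    have : g⁻¹ * a * g = ((a * g)⁻¹ * g)⁻¹ := by group
    rw [this]; exact K.inv_mem h2'
  · rintro ⟨h1, k, hk, rfl⟩
    constructor
    · show ((g * k * g⁻¹ * 1 : J) : J ⧸ H) = ((1 : J) : J ⧸ H)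
      rw [QuotientGroup.eq]
      simpa using H.inv_mem h1
    · show ((g * k * g⁻¹ * g : J) : J ⧸ K) = (g : J ⧸ K)
      rw [QuotientGroup.eq]
      have : (g * k * g⁻¹ * g)⁻¹ * g = k⁻¹ := by group
      rw [this]; exact K.inv_mem hk

end Aux

/-- For a group `J` and subgroups `H, K ≤ J`, there is a bijection between
`(J/H) × (J/K)` and the disjoint union over the double cosets `d ∈ H\J/K` of the left coset
spaces `J/(H ∩ x_d K x_d⁻¹)`, where `x_d` is any choice of representative of `d`. -/
theorem statement0 (J : Type*) [Group J] (H K : Subgroup J)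
    (x : DoubleCoset.Quotient (H : Set J) (K : Set J) → J)
    (hx : ∀ d, DoubleCoset.mk H K (x d) = d) :
    Nonempty ((J ⧸ H) × (J ⧸ K) ≃
      (d : DoubleCoset.Quotient (H : Set J) (K : Set J)) ×
        (J ⧸ (H ⊓ Subgroup.map (MulAut.conj (x d)).toMonoidHom K))) := by
  set e := orbitsEquivDoset H K with he
  set φ : Quotient (orbitRel J ((J ⧸ H) × (J ⧸ K))) → (J ⧸ H) × (J ⧸ K) :=
    fun ω => ((↑(1 : J) : J ⧸ H), ((x (e ω) : J) : J ⧸ K)) with hφdef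
  have hφ : Function.LeftInverse Quotient.mk'' φ := by
    intro ω
    apply e.injective
    have : e (Quotient.mk'' (φ ω)) = dosetOfPair H K (φ ω) := rfl
    rw [this, hφdef]
    show dosetOfPair H K (((↑(1:J) : J ⧸ H)), _) = e ω
    rw [dosetOfPair_mk, inv_one, one_mul, hx]
  have key : ∀ d, stabilizer J (φ (e.symm d)) =
      H ⊓ Subgroup.map (MulAut.conj (x d)).toMonoidHom K := by
    intro d
    rw [hφdef]
    simp only [e.apply_symm_apply]
    exact stabilizer_pair H K (x d)
  exact ⟨(MulAction.selfEquivSigmaOrbitsQuotientStabilizer' J _ hφ).trans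
    ((Equiv.sigmaCongrLeft' e).trans (Equiv.sigmaCongrRight fun d =>
      Equiv.cast (congrArg (fun S : Subgroup J => J ⧸ S) (key d))))⟩
end

section
/- The conjugation action map G × SG → SG defined by (g, K) ↦ gKg⁻¹ is continuous, where G × SG carries the product topology. -/
variable (G : Type*) [Group G] [TopologicalSpace G]

/-- The space `SG` of closed subgroups of a topological group `G`. -/
abbrev ClosedSubgroupSpace : Type _ := {K : Subgroup G // IsClosed (K : Set G)}

/-- The topology on `SG` generated by the sets `O(N,J) = {K : NK = J}`, for `N` an open
normal subgroup of `G` and `J` an open subgroup containing `N`. -/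
instance (priority := high) : TopologicalSpace (ClosedSubgroupSpace G) :=
  TopologicalSpace.generateFrom
    {s | ∃ N J : Subgroup G, N.Normal ∧ IsOpen (N : Set G) ∧ IsOpen (J : Set G) ∧ N ≤ J ∧
      s = {K : ClosedSubgroupSpace G | N ⊔ K.1 = J}}

theorem conj_isClosed (g : G) [IsTopologicalGroup G] (K : Subgroup G)
    (hK : IsClosed (K : Set G)) :
    IsClosed ((Subgroup.map (MulAut.conj g).toMonoidHom K : Subgroup G) : Set G) := by
  have h : ((Subgroup.map (MulAut.conj g).toMonoidHom K : Subgroup G) : Set G) =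
      ((Homeomorph.mulLeft g).trans (Homeomorph.mulRight g⁻¹)) '' (K : Set G) := by
    rw [Subgroup.coe_map]
    rfl
  rw [h]
  exact (Homeomorph.isClosed_image _).mpr hK


section Helpers

variable {G}

lemma map_conj_self_of_mem {J : Subgroup G} {n : G} (hn : n ∈ J) :
    Subgroup.map (MulAut.conj n).toMonoidHom J = J := by
  ext x
  simp only [Subgroup.mem_map, MulEquiv.coe_toMonoidHom, MulAut.conj_apply]
  constructor
  · rintro ⟨y, hy, rfl⟩
    exact J.mul_mem (J.mul_mem hn hy) (J.inv_mem hn)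
  · intro hx
    exact ⟨n⁻¹ * x * n, J.mul_mem (J.mul_mem (J.inv_mem hn) hx) hn, by group⟩

lemma map_conj_of_normal {N : Subgroup G} (hN : N.Normal) (g : G) :
    Subgroup.map (MulAut.conj g).toMonoidHom N = N := by
  ext x
  simp only [Subgroup.mem_map, MulEquiv.coe_toMonoidHom, MulAut.conj_apply]
  constructor
  · rintro ⟨y, hy, rfl⟩
    exact hN.conj_mem y hy g
  · intro hx
    exact ⟨g⁻¹ * x * g, by simpa using hN.conj_mem x hx g⁻¹, by group⟩

lemma conj_comp_conj_inv (g : G) :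
    (MulAut.conj g).toMonoidHom.comp (MulAut.conj g⁻¹).toMonoidHom = MonoidHom.id G := by
  ext x
  simp only [MonoidHom.comp_apply, MulEquiv.coe_toMonoidHom, MulAut.conj_apply,
    MonoidHom.id_apply]
  group

lemma conj_inv_comp_conj (g : G) :
    (MulAut.conj g⁻¹).toMonoidHom.comp (MulAut.conj g).toMonoidHom = MonoidHom.id G := by
  simpa using conj_comp_conj_inv g⁻¹

lemma map_conj_map_conj_inv (g : G) (J : Subgroup G) :
    Subgroup.map (MulAut.conj g).toMonoidHom
      (Subgroup.map (MulAut.conj g⁻¹).toMonoidHom J) = J := by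
  rw [Subgroup.map_map, conj_comp_conj_inv, Subgroup.map_id]

lemma map_conj_mul (a b : G) (J : Subgroup G) :
    Subgroup.map (MulAut.conj (a * b)).toMonoidHom J =
      Subgroup.map (MulAut.conj a).toMonoidHom
        (Subgroup.map (MulAut.conj b).toMonoidHom J) := by
  rw [Subgroup.map_map]
  congr 1
  ext x
  simp only [MonoidHom.comp_apply, MulEquiv.coe_toMonoidHom, MulAut.conj_apply]
  group

lemma key_iff {N : Subgroup G} (hN : N.Normal) (g : G) (K J : Subgroup G) :
    N ⊔ Subgroup.map (MulAut.conj g).toMonoidHom K = J ↔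
      N ⊔ K = Subgroup.map (MulAut.conj g⁻¹).toMonoidHom J := by
  have hmap : N ⊔ Subgroup.map (MulAut.conj g).toMonoidHom K =
      Subgroup.map (MulAut.conj g).toMonoidHom (N ⊔ K) := by
    rw [Subgroup.map_sup, map_conj_of_normal hN g]
  rw [hmap]
  constructor
  · rintro rfl
    rw [Subgroup.map_map, conj_inv_comp_conj, Subgroup.map_id]
  · intro h
    rw [h, map_conj_map_conj_inv]

lemma conj_isOpen [IsTopologicalGroup G] (g : G) (J : Subgroup G)
    (hJ : IsOpen (J : Set G)) :
    IsOpen ((Subgroup.map (MulAut.conj g).toMonoidHom J : Subgroup G) : Set G) := by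
  have h : ((Subgroup.map (MulAut.conj g).toMonoidHom J : Subgroup G) : Set G) =
      ((Homeomorph.mulLeft g).trans (Homeomorph.mulRight g⁻¹)) '' (J : Set G) := by
    rw [Subgroup.coe_map]; rfl
  rw [h]
  exact (Homeomorph.isOpen_image _).mpr hJ

end Helpers

/-- For a profinite group `G`, the conjugation action
`G × SG → SG`, `(g, K) ↦ gKg⁻¹` is continuous. -/
theorem statement8 [IsTopologicalGroup G] [CompactSpace G] [T2Space G]
    [TotallyDisconnectedSpace G] :
    Continuous (fun p : G × ClosedSubgroupSpace G =>
      (⟨Subgroup.map (MulAut.conj p.1).toMonoidHom p.2.1,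
        conj_isClosed G p.1 p.2.1 p.2.2⟩ : ClosedSubgroupSpace G)) := by
  rw [continuous_generateFrom_iff]
  rintro s ⟨N, J, hN, hNopen, hJopen, hNJ, rfl⟩
  rw [isOpen_iff_forall_mem_open]
  rintro ⟨g₀, K₀⟩ hmem
  simp only [Set.mem_preimage, Set.mem_setOf_eq] at hmem
  set J₀ : Subgroup G := Subgroup.map (MulAut.conj g₀⁻¹).toMonoidHom J with hJ₀
  refine ⟨((fun g => g * g₀⁻¹) ⁻¹' (N : Set G)) ×ˢ
      {K : ClosedSubgroupSpace G | N ⊔ K.1 = J₀}, ?_, ?_, ?_⟩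
  · rintro ⟨g, K⟩ ⟨hg, hK⟩
    simp only [Set.mem_preimage, SetLike.mem_coe] at hg
    simp only [Set.mem_setOf_eq] at hK
    simp only [Set.mem_preimage, Set.mem_setOf_eq]
    rw [key_iff hN]
    have hg' : g⁻¹ = g₀⁻¹ * (g * g₀⁻¹)⁻¹ := by group
    have : Subgroup.map (MulAut.conj g⁻¹).toMonoidHom J = J₀ := by
      rw [hg', map_conj_mul, map_conj_self_of_mem (J.inv_mem (hNJ hg))]
    rw [this, hK]
  · apply IsOpen.prod
    · exact hNopen.preimage (by continuity)
    · apply TopologicalSpace.isOpen_generateFrom_of_mem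
      refine ⟨N, J₀, hN, hNopen, conj_isOpen g₀⁻¹ J hJopen, ?_, rfl⟩
      have : N = Subgroup.map (MulAut.conj g₀⁻¹).toMonoidHom N :=
        (map_conj_of_normal hN g₀⁻¹).symm
      rw [this]
      exact Subgroup.map_mono hNJ
  · constructor
    · simpa using N.one_mem
    · simp only [Set.mem_setOf_eq]
      rw [← key_iff hN]
      exact hmem
end

section
/- The collection of sets of the form O(N, NK) = {L ∈ SG : NL = NK}, where N ranges over the open normal subgroups of G and K over the closed subgroups of G, is a topological basis for SG, and moreover every set O(N, NK) is compact and open in SG. -/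
variable (G : Type*) [Group G] [TopologicalSpace G]

section Aux

variable {G}

/-- The generating family of the topology on `SG`. -/
def genSet : Set (Set (ClosedSubgroupSpace G)) :=
  {s | ∃ N J : Subgroup G, N.Normal ∧ IsOpen (N : Set G) ∧ IsOpen (J : Set G) ∧ N ≤ J ∧
    s = {K : ClosedSubgroupSpace G | N ⊔ K.1 = J}}

/-- The basis family in the statement. -/
def basSet : Set (Set (ClosedSubgroupSpace G)) :=
  {s : Set (ClosedSubgroupSpace G) | ∃ (N : Subgroup G) (K : ClosedSubgroupSpace G),
    N.Normal ∧ IsOpen (N : Set G) ∧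
    s = {L : ClosedSubgroupSpace G | N ⊔ L.1 = N ⊔ K.1}}

variable [IsTopologicalGroup G]

lemma basSet_eq_genSet : (basSet : Set (Set (ClosedSubgroupSpace G))) = genSet := by
  ext s
  constructor
  · rintro ⟨N, K, hnorm, hopen, rfl⟩
    exact ⟨N, N ⊔ K.1, hnorm, hopen, Subgroup.isOpen_mono le_sup_left hopen, le_sup_left, rfl⟩
  · rintro ⟨N, J, hnorm, hopen, hJopen, hNJ, rfl⟩
    refine ⟨N, ⟨J, Subgroup.isClosed_of_isOpen J hJopen⟩, hnorm, hopen, ?_⟩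
    simp [sup_eq_right.mpr hNJ]

lemma coe_mono {M M' : OpenNormalSubgroup G} (h : M ≤ M') :
    (M : Subgroup G) ≤ (M' : Subgroup G) := fun x hx => h hx

variable [CompactSpace G]

/-- Given an ultrafilter on `SG` and an open normal subgroup `M`, there is a subgroup `J`
such that the set of `K` with `M ⊔ K = J` belongs to the ultrafilter. -/
lemma exists_ultrafilter_sup_eq (F : Ultrafilter (ClosedSubgroupSpace G))
    (M : OpenNormalSubgroup G) :
    ∃ J : Subgroup G, {K : ClosedSubgroupSpace G | (M : Subgroup G) ⊔ K.1 = J} ∈ F := by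
  have hfinQ : Finite (G ⧸ (M : Subgroup G)) :=
    Subgroup.quotient_finite_of_isOpen _ M.toOpenSubgroup.isOpen
  have hfin : {H : Subgroup G | (M : Subgroup G) ≤ H}.Finite := by
    refine Set.Finite.of_finite_image (f := fun H =>
      ((Subgroup.map (QuotientGroup.mk' (M : Subgroup G)) H :
        Subgroup (G ⧸ (M : Subgroup G))) : Set (G ⧸ (M : Subgroup G)))) (Set.toFinite _) ?_
    intro H₁ h₁ H₂ h₂ hEq
    have hEq' : Subgroup.map (QuotientGroup.mk' (M : Subgroup G)) H₁ =
        Subgroup.map (QuotientGroup.mk' (M : Subgroup G)) H₂ := SetLike.coe_injective hEq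
    have := congrArg (Subgroup.comap (QuotientGroup.mk' (M : Subgroup G))) hEq'
    rwa [Subgroup.comap_map_eq, Subgroup.comap_map_eq, QuotientGroup.ker_mk',
      sup_eq_left.mpr h₁, sup_eq_left.mpr h₂] at this
  have hcover : (Set.univ : Set (ClosedSubgroupSpace G)) =
      ⋃ H ∈ {H : Subgroup G | (M : Subgroup G) ≤ H},
        {K : ClosedSubgroupSpace G | (M : Subgroup G) ⊔ K.1 = H} := by
    ext K
    simp only [Set.mem_univ, Set.mem_iUnion, Set.mem_setOf_eq, true_iff]
    exact ⟨(M : Subgroup G) ⊔ K.1, le_sup_left, rfl⟩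
  have hmem : (⋃ H ∈ {H : Subgroup G | (M : Subgroup G) ≤ H},
      {K : ClosedSubgroupSpace G | (M : Subgroup G) ⊔ K.1 = H}) ∈ F := by
    rw [← hcover]; exact Filter.univ_mem
  obtain ⟨H, _, hH⟩ := (Ultrafilter.finite_biUnion_mem_iff hfin).mp hmem
  exact ⟨H, hH⟩

end Aux

/-- For a profinite group `G`, the sets `O(N, NK)` with `N` open normal and
`K` a closed subgroup form a basis of the topology of `SG`, and each such set is compact
and open. -/
theorem statement9 [IsTopologicalGroup G] [CompactSpace G] [T2Space G]
    [TotallyDisconnectedSpace G] :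
    TopologicalSpace.IsTopologicalBasis
      {s : Set (ClosedSubgroupSpace G) | ∃ (N : Subgroup G) (K : ClosedSubgroupSpace G),
        N.Normal ∧ IsOpen (N : Set G) ∧
        s = {L : ClosedSubgroupSpace G | N ⊔ L.1 = N ⊔ K.1}} ∧
    ∀ s ∈ {s : Set (ClosedSubgroupSpace G) | ∃ (N : Subgroup G) (K : ClosedSubgroupSpace G),
        N.Normal ∧ IsOpen (N : Set G) ∧
        s = {L : ClosedSubgroupSpace G | N ⊔ L.1 = N ⊔ K.1}},
      IsCompact s ∧ IsOpen s := by
  have hopen : ∀ s ∈ (basSet : Set (Set (ClosedSubgroupSpace G))), IsOpen s := by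
    intro s hs
    have hs' : s ∈ (genSet : Set (Set (ClosedSubgroupSpace G))) := basSet_eq_genSet (G := G) ▸ hs
    exact TopologicalSpace.GenerateOpen.basic s hs'
  constructor
  · refine ⟨?_, ?_, ?_⟩
    · -- exists_subset_inter
      rintro t₁ ⟨N₁, K₁, hn₁, ho₁, rfl⟩ t₂ ⟨N₂, K₂, hn₂, ho₂, rfl⟩ L ⟨h₁, h₂⟩
      refine ⟨{L' : ClosedSubgroupSpace G | (N₁ ⊓ N₂) ⊔ L'.1 = (N₁ ⊓ N₂) ⊔ L.1},
        ⟨N₁ ⊓ N₂, L, Subgroup.normal_inf_normal N₁ N₂, by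
          rw [Subgroup.coe_inf]; exact ho₁.inter ho₂, rfl⟩, rfl, ?_⟩
      intro L' hL'
      have hL'' : (N₁ ⊓ N₂) ⊔ L'.1 = (N₁ ⊓ N₂) ⊔ L.1 := hL'
      have key : ∀ (N : Subgroup G), N₁ ⊓ N₂ ≤ N → N ⊔ L'.1 = N ⊔ L.1 := by
        intro N hN
        have : N ⊔ ((N₁ ⊓ N₂) ⊔ L'.1) = N ⊔ ((N₁ ⊓ N₂) ⊔ L.1) := by rw [hL'']
        rwa [← sup_assoc, ← sup_assoc, sup_eq_left.mpr hN] at this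
      have e₁ : N₁ ⊔ L.1 = N₁ ⊔ K₁.1 := h₁
      have e₂ : N₂ ⊔ L.1 = N₂ ⊔ K₂.1 := h₂
      constructor
      · show N₁ ⊔ L'.1 = N₁ ⊔ K₁.1
        rw [key N₁ inf_le_left, e₁]
      · show N₂ ⊔ L'.1 = N₂ ⊔ K₂.1
        rw [key N₂ inf_le_right, e₂]
    · -- sUnion_eq
      apply Set.eq_univ_of_univ_subset
      intro L _
      exact ⟨Set.univ, ⟨⊤, L, inferInstance, by simp, by simp⟩, trivial⟩
    · -- eq_generateFrom
      exact (congrArg TopologicalSpace.generateFrom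
        (basSet_eq_genSet (G := G)).symm :
        TopologicalSpace.generateFrom genSet = _)
  · rintro s hs
    refine ⟨?_, hopen s hs⟩
    obtain ⟨N₀, K₀, hn₀, ho₀, rfl⟩ := hs
    rw [isCompact_iff_ultrafilter_le_nhds]
    intro F hF
    rw [Filter.le_principal_iff] at hF
    -- choose the "limit" value for each open normal subgroup
    choose J hJ using exists_ultrafilter_sup_eq F (G := G)
    have hNle : ∀ M : OpenNormalSubgroup G, (M : Subgroup G) ≤ J M := by
      intro M
      obtain ⟨K, hK⟩ := Ultrafilter.nonempty_of_mem (hJ M)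
      rw [← hK]; exact le_sup_left
    have hJopen : ∀ M : OpenNormalSubgroup G, IsOpen ((J M : Subgroup G) : Set G) :=
      fun M => Subgroup.isOpen_mono (hNle M) M.toOpenSubgroup.isOpen
    have hcompat : ∀ M M' : OpenNormalSubgroup G, M ≤ M' →
        (M' : Subgroup G) ⊔ J M = J M' := by
      intro M M' h
      obtain ⟨K, hK1, hK2⟩ := Ultrafilter.nonempty_of_mem (Filter.inter_mem (hJ M) (hJ M'))
      rw [← hK2, ← hK1, ← sup_assoc, sup_eq_left.mpr (coe_mono h)]
    have hJmono : ∀ M M' : OpenNormalSubgroup G, M ≤ M' → J M ≤ J M' := by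
      intro M M' h
      rw [← hcompat M M' h]; exact le_sup_right
    set L : Subgroup G := ⨅ M : OpenNormalSubgroup G, J M with hLdef
    have hLcoe : (L : Set G) = ⋂ M : OpenNormalSubgroup G, ((J M : Subgroup G) : Set G) :=
      Subgroup.coe_iInf
    have hLclosed : IsClosed (L : Set G) := by
      rw [hLcoe]
      exact isClosed_iInter fun M => Subgroup.isClosed_of_isOpen _ (hJopen M)
    -- the key fact: N ⊔ L = J N for every open normal N
    have hkey : ∀ N : OpenNormalSubgroup G, (N : Subgroup G) ⊔ L = J N := by
      intro N
      haveI : Nonempty (OpenNormalSubgroup G) := ⟨N⟩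
      refine le_antisymm (sup_le (hNle N) (iInf_le _ N)) ?_
      intro g hg
      -- the coset `N * g` meets every `J M`
      set D : Set G := (fun m => m * g) '' ((N : Subgroup G) : Set G) with hD
      have hne : ∀ M : OpenNormalSubgroup G, (((J M : Subgroup G) : Set G) ∩ D).Nonempty := by
        intro M
        have h1 : (N : Subgroup G) ⊔ J (N ⊓ M) = J N := hcompat _ _ inf_le_left
        have hg' : g ∈ (((N : Subgroup G) ⊔ J (N ⊓ M) : Subgroup G) : Set G) := by
          rw [h1]; exact hg
        rw [Subgroup.normal_mul] at hg'
        obtain ⟨n, hn, l, hl, hnl⟩ := hg'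
        refine ⟨l, hJmono _ _ inf_le_right hl, n⁻¹, inv_mem hn, ?_⟩
        rw [← hnl]; group
      have hdir : Directed (· ⊇ ·)
          (fun M : OpenNormalSubgroup G => ((J M : Subgroup G) : Set G) ∩ D) := by
        intro M₁ M₂
        exact ⟨M₁ ⊓ M₂,
          Set.inter_subset_inter_left D (hJmono _ _ inf_le_left),
          Set.inter_subset_inter_left D (hJmono _ _ inf_le_right)⟩
      have hDclosed : IsClosed D := by
        exact (Homeomorph.mulRight g).isClosedMap _
          (Subgroup.isClosed_of_isOpen _ N.toOpenSubgroup.isOpen)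
      have hclosed : ∀ M : OpenNormalSubgroup G,
          IsClosed (((J M : Subgroup G) : Set G) ∩ D) :=
        fun M => (Subgroup.isClosed_of_isOpen _ (hJopen M)).inter hDclosed
      obtain ⟨x, hx⟩ := IsCompact.nonempty_iInter_of_directed_nonempty_isCompact_isClosed
        _ hdir hne (fun M => (hclosed M).isCompact) hclosed
      simp only [Set.mem_iInter, Set.mem_inter_iff] at hx
      have hxL : x ∈ L := by
        rw [← SetLike.mem_coe, hLcoe, Set.mem_iInter]
        exact fun M => (hx M).1
      obtain ⟨m, hm, hmx⟩ := (hx N).2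
      have hgx : g = m⁻¹ * x := by rw [← hmx]; group
      have hfin : g ∈ ((((N : Subgroup G) ⊔ L) : Subgroup G) : Set G) := by
        rw [Subgroup.normal_mul, hgx]
        exact Set.mul_mem_mul (inv_mem hm) hxL
      exact hfin
    -- the limit point
    refine ⟨⟨L, hLclosed⟩, ?_, ?_⟩
    · -- membership in the original set
      obtain ⟨K, hK1, hK2⟩ := Ultrafilter.nonempty_of_mem
        (Filter.inter_mem hF (hJ ⟨⟨N₀, ho₀⟩, hn₀⟩))
      show N₀ ⊔ L = N₀ ⊔ K₀.1
      have hk : N₀ ⊔ L = J ⟨⟨N₀, ho₀⟩, hn₀⟩ := hkey ⟨⟨N₀, ho₀⟩, hn₀⟩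
      have hK1' : N₀ ⊔ K.1 = N₀ ⊔ K₀.1 := hK1
      have hK2' : N₀ ⊔ K.1 = J ⟨⟨N₀, ho₀⟩, hn₀⟩ := hK2
      rw [hk, ← hK2', hK1']
    · -- convergence
      rw [TopologicalSpace.nhds_generateFrom]
      simp only [le_iInf_iff, Filter.le_principal_iff]
      rintro s ⟨hLs, N', J', hnorm, hNopen, _, _, rfl⟩
      simp only [Set.mem_setOf_eq] at hLs
      have hk : N' ⊔ L = J ⟨⟨N', hNopen⟩, hnorm⟩ := hkey ⟨⟨N', hNopen⟩, hnorm⟩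
      have hJ' : J' = J ⟨⟨N', hNopen⟩, hnorm⟩ := by rw [← hLs, hk]
      have hmem : {K : ClosedSubgroupSpace G | N' ⊔ K.1 = J ⟨⟨N', hNopen⟩, hnorm⟩} ∈ F :=
        hJ ⟨⟨N', hNopen⟩, hnorm⟩
      rw [hJ']
      exact hmem
end

section
/- The space SG of closed subgroups of a profinite group G is a profinite space: it is compact, Hausdorff and totally disconnected. -/
variable (G : Type*) [Group G] [TopologicalSpace G]

section Aux

variable {G}

open TopologicalSpace Pointwise

/-- In a profinite group, every open neighborhood of `1` contains an open normal subgroup. -/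
private lemma exists_ons [IsTopologicalGroup G] [CompactSpace G] [T2Space G]
    [TotallyDisconnectedSpace G] {U : Set G} (hU : IsOpen U) (h1 : (1 : G) ∈ U) :
    ∃ N : OpenNormalSubgroup G, (N : Set G) ⊆ U := by
  obtain ⟨V, hV, h1V, hVU⟩ := compact_exists_isClopen_in_isOpen hU h1
  obtain ⟨N, hN⟩ := IsTopologicalGroup.exist_openNormalSubgroup_sub_clopen_nhds_of_one hV h1V
  exact ⟨N, hN.trans hVU⟩

/-- A point outside a closed subgroup stays outside after saturating by a small open normal
subgroup. -/
private lemma exists_not_mem_sup [IsTopologicalGroup G] [CompactSpace G] [T2Space G]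
    [TotallyDisconnectedSpace G] {K : Subgroup G} (hK : IsClosed (K : Set G)) {g : G}
    (hg : g ∉ K) : ∃ N : OpenNormalSubgroup G, g ∉ (N : Subgroup G) ⊔ K := by
  have hU : IsOpen {x : G | x * g ∉ K} :=
    hK.isOpen_compl.preimage (continuous_mul_right g)
  obtain ⟨N, hN⟩ := exists_ons hU (by simpa using hg)
  refine ⟨N, fun hmem => ?_⟩
  have hmem' : g ∈ (↑((N : Subgroup G) ⊔ K) : Set G) := hmem
  rw [Subgroup.normal_mul] at hmem'
  obtain ⟨n, hn, k, hk, hnk⟩ := hmem'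
  have : n⁻¹ * g ∉ K := hN (inv_mem hn)
  apply this
  have : n⁻¹ * g = k := by rw [← hnk]; group
  rw [this]; exact hk

/-- The collection of subgroups containing a fixed open subgroup is finite. -/
private lemma finite_over [IsTopologicalGroup G] [CompactSpace G] (N : Subgroup G)
    (hN : IsOpen (N : Set G)) (hn : N.Normal) :
    {J : Subgroup G | N ≤ J}.Finite := by
  haveI := hn
  haveI : Finite (G ⧸ N) := Subgroup.quotient_finite_of_isOpen N hN
  haveI : Finite (Subgroup (G ⧸ N)) :=
    Finite.of_injective (fun H : Subgroup (G ⧸ N) => (H : Set (G ⧸ N))) SetLike.coe_injective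
  apply Set.Finite.of_finite_image (f := Subgroup.map (QuotientGroup.mk' N))
  · exact Set.toFinite _
  · intro J hJ K hK h
    have e : ∀ {L : Subgroup G}, N ≤ L →
        (L.map (QuotientGroup.mk' N)).comap (QuotientGroup.mk' N) = L := by
      intro L hL
      rw [Subgroup.comap_map_eq, QuotientGroup.ker_mk', sup_eq_left.mpr hL]
    rw [← e hJ, ← e hK, h]

/-- The basic sets `O(N,J)` are clopen. -/
private lemma isClopen_gen {N J : Subgroup G} (hNn : N.Normal) (hNo : IsOpen (N : Set G))
    (hJo : IsOpen (J : Set G)) (hNJ : N ≤ J) [ContinuousMul G] :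
    IsClopen {K : ClosedSubgroupSpace G | N ⊔ K.1 = J} := by
  constructor
  · rw [← isOpen_compl_iff]
    have hcompl : {K : ClosedSubgroupSpace G | N ⊔ K.1 = J}ᶜ =
        ⋃ J' ∈ {J' : Subgroup G | IsOpen (J' : Set G) ∧ N ≤ J' ∧ J' ≠ J},
          {K : ClosedSubgroupSpace G | N ⊔ K.1 = J'} := by
      ext K
      simp only [Set.mem_compl_iff, Set.mem_setOf_eq, Set.mem_iUnion]
      constructor
      · intro h
        exact ⟨N ⊔ K.1, ⟨Subgroup.isOpen_mono le_sup_left hNo, le_sup_left, h⟩, rfl⟩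
      · rintro ⟨J', ⟨_, _, hne⟩, h⟩
        rw [h]; exact hne
    rw [hcompl]
    exact isOpen_biUnion fun J' hJ' =>
      isOpen_generateFrom_of_mem ⟨N, J', hNn, hNo, hJ'.1, hJ'.2.1, rfl⟩
  · exact isOpen_generateFrom_of_mem ⟨N, J, hNn, hNo, hJo, hNJ, rfl⟩

/-- Separation of two closed subgroups by a clopen basic set. -/
private lemma exists_clopen_sep [IsTopologicalGroup G] [CompactSpace G] [T2Space G]
    [TotallyDisconnectedSpace G] {K K' : ClosedSubgroupSpace G} {g : G}
    (hgK : g ∈ K.1) (hgK' : g ∉ K'.1) :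
    ∃ U : Set (ClosedSubgroupSpace G), IsClopen U ∧ K' ∈ U ∧ K ∉ U := by
  obtain ⟨N, hN⟩ := exists_not_mem_sup K'.2 hgK'
  refine ⟨{L : ClosedSubgroupSpace G | (N : Subgroup G) ⊔ L.1 = (N : Subgroup G) ⊔ K'.1},
    isClopen_gen (by infer_instance) N.isOpen
      (Subgroup.isOpen_mono le_sup_left N.isOpen) le_sup_left, rfl, ?_⟩
  intro h
  apply hN
  rw [← h]
  exact Subgroup.mem_sup_right hgK

end Aux

open Pointwise Topology Filter in
/-- For a profinite group `G`, the space `SG` of closed subgroups is a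
profinite space: compact, Hausdorff and totally disconnected. -/
theorem statement10 [IsTopologicalGroup G] [CompactSpace G] [T2Space G]
    [TotallyDisconnectedSpace G] :
    CompactSpace (ClosedSubgroupSpace G) ∧ T2Space (ClosedSubgroupSpace G) ∧
      TotallyDisconnectedSpace (ClosedSubgroupSpace G) := by
  haveI hNE : Nonempty (OpenNormalSubgroup G) :=
    ⟨{ toOpenSubgroup := ⊤, isNormal' := ⟨fun n _ g => Subgroup.mem_top _⟩ }⟩
  -- Compactness
  have hcompact : CompactSpace (ClosedSubgroupSpace G) := by
    constructor
    rw [isCompact_iff_ultrafilter_le_nhds]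
    intro F _
    -- push forward along `K ↦ N ⊔ K` into the finite set of subgroups over `N`
    have hex : ∀ N : OpenNormalSubgroup G, ∃ J : Subgroup G, (N : Subgroup G) ≤ J ∧
        {K : ClosedSubgroupSpace G | (N : Subgroup G) ⊔ K.1 = J} ∈ F := by
      intro N
      set φ : ClosedSubgroupSpace G → Subgroup G := fun K => (N : Subgroup G) ⊔ K.1 with hφ
      have hmem : {J : Subgroup G | (N : Subgroup G) ≤ J} ∈ Ultrafilter.map φ F :=
        Ultrafilter.mem_map.mpr (Filter.univ_mem' fun K =>
          (le_sup_left : (N : Subgroup G) ≤ (N : Subgroup G) ⊔ K.1))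
      obtain ⟨J, hJ, hpure⟩ :=
        Ultrafilter.eq_pure_of_finite_mem (finite_over (N : Subgroup G) N.isOpen N.isNormal') hmem
      refine ⟨J, hJ, ?_⟩
      have h1 : ({J} : Set (Subgroup G)) ∈ Ultrafilter.map φ F := by
        rw [hpure]; exact rfl
      rw [Ultrafilter.mem_map] at h1
      have : φ ⁻¹' {J} = {K : ClosedSubgroupSpace G | (N : Subgroup G) ⊔ K.1 = J} := by
        ext K; simp [hφ]
      rwa [this] at h1
    choose J hle hF using hex
    have hcompat : ∀ N M : OpenNormalSubgroup G, (N : Subgroup G) ≤ (M : Subgroup G) →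
        (M : Subgroup G) ⊔ J N = J M := by
      intro N M h
      obtain ⟨K, hK1, hK2⟩ := Ultrafilter.nonempty_of_mem (Filter.inter_mem (hF N) (hF M))
      calc (M : Subgroup G) ⊔ J N = (M : Subgroup G) ⊔ ((N : Subgroup G) ⊔ K.1) := by rw [hK1]
        _ = ((M : Subgroup G) ⊔ (N : Subgroup G)) ⊔ K.1 := by rw [sup_assoc]
        _ = (M : Subgroup G) ⊔ K.1 := by rw [sup_eq_left.mpr h]
        _ = J M := hK2
    have hinf_le_left : ∀ M₁ M₂ : OpenNormalSubgroup G,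
        ((M₁ ⊓ M₂ : OpenNormalSubgroup G) : Subgroup G) ≤ (M₁ : Subgroup G) :=
      fun M₁ M₂ x hx => hx.1
    have hinf_le_right : ∀ M₁ M₂ : OpenNormalSubgroup G,
        ((M₁ ⊓ M₂ : OpenNormalSubgroup G) : Subgroup G) ≤ (M₂ : Subgroup G) :=
      fun M₁ M₂ x hx => hx.2
    have hJmono : ∀ {N M : OpenNormalSubgroup G}, (N : Subgroup G) ≤ (M : Subgroup G) →
        J N ≤ J M := fun {N M} h => (hcompat N M h) ▸ le_sup_right
    set Kinf : Subgroup G := ⨅ N : OpenNormalSubgroup G, J N with hKinfdef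
    have hKinfle : ∀ N, Kinf ≤ J N := fun N => iInf_le J N
    have hJopen : ∀ N : OpenNormalSubgroup G, IsOpen ((J N : Subgroup G) : Set G) :=
      fun N => Subgroup.isOpen_mono (hle N) N.isOpen
    have hJclosed : ∀ N : OpenNormalSubgroup G, IsClosed ((J N : Subgroup G) : Set G) :=
      fun N => Subgroup.isClosed_of_isOpen _ (hJopen N)
    have hKinfclosed : IsClosed (Kinf : Set G) := by
      rw [hKinfdef, Subgroup.coe_iInf]
      exact isClosed_iInter fun N => hJclosed N
    have hmain : ∀ N : OpenNormalSubgroup G, (N : Subgroup G) ⊔ Kinf = J N := by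
      intro N
      refine le_antisymm (sup_le (hle N) (hKinfle N)) ?_
      intro g hg
      have hZ : (⋂ M : OpenNormalSubgroup G,
          (g • ((N : Subgroup G) : Set G)) ∩ ((J M : Subgroup G) : Set G)).Nonempty := by
        apply IsCompact.nonempty_iInter_of_directed_nonempty_isCompact_isClosed
        · intro M₁ M₂
          exact ⟨M₁ ⊓ M₂,
            Set.inter_subset_inter_right _ (hJmono (hinf_le_left M₁ M₂)),
            Set.inter_subset_inter_right _ (hJmono (hinf_le_right M₁ M₂))⟩
        · intro M
          obtain ⟨K, hK1, hK2⟩ :=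
            Ultrafilter.nonempty_of_mem (Filter.inter_mem (hF N) (hF (M ⊓ N)))
          have hgJ : g ∈ (↑((N : Subgroup G) ⊔ K.1) : Set G) := by rw [hK1]; exact hg
          rw [Subgroup.normal_mul] at hgJ
          obtain ⟨n, hn, k, hk, hnk⟩ := hgJ
          refine ⟨k, ?_, ?_⟩
          · rw [mem_leftCoset_iff]
            have : g⁻¹ * k = g⁻¹ * n⁻¹ * g := by rw [← hnk]; group
            rw [SetLike.mem_coe, this]
            have := (inferInstance : (N : Subgroup G).Normal)
            simpa using this.conj_mem n⁻¹ (inv_mem hn) g⁻¹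
          · have hkJ : k ∈ J (M ⊓ N) := by
              rw [← hK2]; exact Subgroup.mem_sup_right hk
            exact hJmono (hinf_le_left M N) hkJ
        · intro M
          exact (((Subgroup.isClosed_of_isOpen _ N.isOpen).smul g).inter
            (hJclosed M)).isCompact
        · intro M
          exact ((Subgroup.isClosed_of_isOpen _ N.isOpen).smul g).inter (hJclosed M)
      rw [← Set.inter_iInter, ← Subgroup.coe_iInf, ← hKinfdef] at hZ
      obtain ⟨k, hk1, hk2⟩ := hZ
      rw [mem_leftCoset_iff] at hk1
      have : g ∈ (↑(Kinf ⊔ (N : Subgroup G)) : Set G) := by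
        rw [Subgroup.mul_normal]
        exact ⟨k, hk2, (g⁻¹ * k)⁻¹, inv_mem hk1, by group⟩
      rw [sup_comm]
      exact this
    refine ⟨⟨Kinf, hKinfclosed⟩, Set.mem_univ _, ?_⟩
    have hnhds : 𝓝 (⟨Kinf, hKinfclosed⟩ : ClosedSubgroupSpace G) =
        ⨅ s ∈ {s | (⟨Kinf, hKinfclosed⟩ : ClosedSubgroupSpace G) ∈ s ∧
          s ∈ {s | ∃ N J : Subgroup G, N.Normal ∧ IsOpen (N : Set G) ∧ IsOpen (J : Set G) ∧
            N ≤ J ∧ s = {K : ClosedSubgroupSpace G | N ⊔ K.1 = J}}}, Filter.principal s :=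
      TopologicalSpace.nhds_generateFrom
    rw [hnhds]
    refine le_iInf₂ fun s hs => ?_
    obtain ⟨hKs, hsgen⟩ := hs
    obtain ⟨N₀, J₀, hnorm, hNo, hJo, hNJ, rfl⟩ := hsgen
    set N' : OpenNormalSubgroup G := ⟨⟨N₀, hNo⟩, hnorm⟩ with hN'
    have hJ₀ : J₀ = J N' := by
      rw [← hmain N']
      exact hKs.symm
    rw [Filter.le_principal_iff]
    have : {K : ClosedSubgroupSpace G | N₀ ⊔ K.1 = J₀} =
        {K : ClosedSubgroupSpace G | (N' : Subgroup G) ⊔ K.1 = J N'} := by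
      rw [hJ₀]
    rw [this]
    exact hF N'
  -- Total separation
  have hsep : TotallySeparatedSpace (ClosedSubgroupSpace G) := by
    rw [totallySeparatedSpace_iff_exists_isClopen]
    intro K K' hne
    have hne' : K.1 ≠ K'.1 := fun h => hne (Subtype.ext h)
    by_cases hle : K.1 ≤ K'.1
    · have : ¬ K'.1 ≤ K.1 := fun h => hne' (le_antisymm hle h)
      obtain ⟨g, hgK', hgK⟩ := SetLike.exists_of_lt (lt_of_le_of_ne hle hne')
      obtain ⟨U, hU, hKU, hK'U⟩ := exists_clopen_sep (K := K') (K' := K) hgK' hgK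
      exact ⟨U, hU, hKU, hK'U⟩
    · obtain ⟨g, hgK, hgK'⟩ := SetLike.not_le_iff_exists.mp hle
      obtain ⟨U, hU, hK'U, hKU⟩ := exists_clopen_sep hgK hgK'
      exact ⟨Uᶜ, hU.compl, hKU, by simpa using hK'U⟩
  haveI := hsep
  exact ⟨hcompact, inferInstance, inferInstance⟩
end

section
/- Let p be a prime and let ℤ_p denote the additive topological group of p-adic integers. Then the space S(ℤ_p) of closed subgroups of ℤ_p is homeomorphic to the subspace P = {1/n : n ∈ ℕ, n ≥ 1} ∪ {0} of the real line ℝ. -/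
variable (p : ℕ) [Fact p.Prime]

/-- The space `S(ℤ_p)` of closed (additive) subgroups of the `p`-adic integers. -/
abbrev ClosedAddSubgroupSpace : Type _ := {K : AddSubgroup ℤ_[p] // IsClosed (K : Set ℤ_[p])}

/-- The topology on `S(ℤ_p)` generated by the sets `O(N,J) = {K : N + K = J}`, for `N` an
open subgroup and `J` an open subgroup containing `N`. -/
instance (priority := high) : TopologicalSpace (ClosedAddSubgroupSpace p) :=
  TopologicalSpace.generateFrom
    {s | ∃ N J : AddSubgroup ℤ_[p], IsOpen (N : Set ℤ_[p]) ∧ IsOpen (J : Set ℤ_[p]) ∧ N ≤ J ∧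
      s = {K : ClosedAddSubgroupSpace p | N ⊔ K.1 = J}}

/-- The subspace `P = {1/n : n ≥ 1} ∪ {0}` of the real line. -/
def Pspace : Set ℝ := {x : ℝ | ∃ n : ℕ, 1 ≤ n ∧ x = 1 / n} ∪ {0}

namespace Statement12Aux

/-- The subgroup `p^n ℤ_p`. -/
noncomputable def Kgp (n : ℕ) : AddSubgroup ℤ_[p] :=
  (Ideal.span {(p : ℤ_[p]) ^ n} : Ideal ℤ_[p]).toAddSubgroup

lemma mem_Kgp {n : ℕ} {x : ℤ_[p]} : x ∈ Kgp p n ↔ ‖x‖ ≤ (p : ℝ) ^ (-n : ℤ) :=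
  (PadicInt.norm_le_pow_iff_mem_span_pow x n).symm

lemma one_lt_p : (1 : ℝ) < p := by exact_mod_cast (Fact.out : p.Prime).one_lt

lemma coe_Kgp (n : ℕ) : (Kgp p n : Set ℤ_[p]) = {x : ℤ_[p] | ‖x‖ ≤ (p : ℝ) ^ (-n : ℤ)} := by
  ext x; exact mem_Kgp p

lemma isClosed_Kgp (n : ℕ) : IsClosed (Kgp p n : Set ℤ_[p]) := by
  rw [coe_Kgp]
  exact isClosed_le continuous_norm continuous_const

lemma isOpen_Kgp (n : ℕ) : IsOpen (Kgp p n : Set ℤ_[p]) := by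
  have : (Kgp p n : Set ℤ_[p]) = {x : ℤ_[p] | ‖x‖ < (p : ℝ) ^ ((-n : ℤ) + 1)} := by
    ext x
    show x ∈ Kgp p n ↔ ‖x‖ < (p : ℝ) ^ ((-n : ℤ) + 1)
    rw [mem_Kgp, PadicInt.norm_le_pow_iff_norm_lt_pow_add_one]
  rw [this]
  exact isOpen_lt continuous_norm continuous_const

lemma pow_mem_Kgp_iff {m n : ℕ} : (p : ℤ_[p]) ^ n ∈ Kgp p m ↔ m ≤ n := by
  rw [mem_Kgp, PadicInt.norm_p_pow,
    zpow_le_zpow_iff_right₀ (one_lt_p p), neg_le_neg_iff]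
  exact_mod_cast Iff.rfl

lemma Kgp_le_iff {m n : ℕ} : Kgp p n ≤ Kgp p m ↔ m ≤ n := by
  constructor
  · intro h
    exact (pow_mem_Kgp_iff p).mp (h ((pow_mem_Kgp_iff p).mpr le_rfl))
  · intro h x hx
    rw [mem_Kgp] at hx ⊢
    refine hx.trans ?_
    exact zpow_le_zpow_right₀ (le_of_lt (one_lt_p p)) (by exact_mod_cast neg_le_neg (Int.ofNat_le.mpr h))

lemma Kgp_injective : Function.Injective (Kgp p) := by
  intro m n h
  have h1 := (Kgp_le_iff p).mp h.le
  have h2 := (Kgp_le_iff p).mp h.ge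
  omega

lemma Kgp_ne_bot (n : ℕ) : Kgp p n ≠ ⊥ := by
  intro h
  have hmem : (p : ℤ_[p]) ^ n ∈ Kgp p n := (pow_mem_Kgp_iff p).mpr le_rfl
  rw [h, AddSubgroup.mem_bot] at hmem
  have : ‖(p : ℤ_[p]) ^ n‖ = 0 := by rw [hmem, norm_zero]
  rw [PadicInt.norm_p_pow] at this
  have hp0 : (0 : ℝ) < (p : ℝ) ^ (-n : ℤ) := zpow_pos (by linarith [one_lt_p p]) _
  linarith

lemma Kgp_sup_Kgp (a b : ℕ) : Kgp p a ⊔ Kgp p b = Kgp p (min a b) := by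
  rcases le_total a b with h | h
  · rw [min_eq_left h, sup_eq_left]
    exact (Kgp_le_iff p).mpr h
  · rw [min_eq_right h, sup_eq_right]
    exact (Kgp_le_iff p).mpr h

/-- A closed subgroup of `ℤ_p` is an ideal, hence `⊥` or `p^n ℤ_p`. -/
lemma classify_closed {K : AddSubgroup ℤ_[p]} (hK : IsClosed (K : Set ℤ_[p]))
    (hne : K ≠ ⊥) : ∃ n, K = Kgp p n := by
  have smul_mem : ∀ (c : ℤ_[p]) {x : ℤ_[p]}, x ∈ K → c * x ∈ K := by
    intro c x hx
    have hcl : IsClosed ((fun z : ℤ_[p] => z * x) ⁻¹' (K : Set ℤ_[p])) :=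
      hK.preimage (continuous_id.mul continuous_const)
    have hsub : Set.range (Int.cast : ℤ → ℤ_[p]) ⊆
        (fun z : ℤ_[p] => z * x) ⁻¹' (K : Set ℤ_[p]) := by
      rintro _ ⟨m, rfl⟩
      simpa [zsmul_eq_mul] using K.zsmul_mem hx m
    have hcmem : c ∈ closure (Set.range (Int.cast : ℤ → ℤ_[p])) :=
      PadicInt.denseRange_intCast c
    exact (hcl.closure_subset_iff.mpr hsub) hcmem
  set I : Ideal ℤ_[p] :=
    { carrier := (K : Set ℤ_[p])
      add_mem' := fun ha hb => K.add_mem ha hb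
      zero_mem' := K.zero_mem
      smul_mem' := fun c x hx => smul_mem c hx }
  have hIne : I ≠ ⊥ := by
    intro h
    apply hne
    ext x
    constructor
    · intro hx
      have : x ∈ I := hx
      rw [h, Ideal.mem_bot] at this
      simp [this]
    · intro hx
      rw [AddSubgroup.mem_bot] at hx
      exact hx ▸ K.zero_mem
  obtain ⟨n, hn⟩ := PadicInt.ideal_eq_span_pow_p hIne
  refine ⟨n, ?_⟩
  ext x
  have : x ∈ I ↔ x ∈ Ideal.span {(p : ℤ_[p]) ^ n} := by rw [hn]
  exact this

/-- An open subgroup of `ℤ_p` is some `p^n ℤ_p`. -/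
lemma classify_open {N : AddSubgroup ℤ_[p]} (hN : IsOpen (N : Set ℤ_[p])) :
    ∃ n, N = Kgp p n := by
  refine classify_closed p (N.isClosed_of_isOpen hN) ?_
  intro h
  obtain ⟨ε, hε, hball⟩ := Metric.isOpen_iff.mp hN 0 N.zero_mem
  obtain ⟨k, hk⟩ := exists_pow_lt_of_lt_one hε
    (show (p : ℝ)⁻¹ < 1 by rw [inv_lt_one_iff₀]; right; exact one_lt_p p)
  have hmem : (p : ℤ_[p]) ^ k ∈ N := by
    apply hball
    rw [Metric.mem_ball, dist_zero_right, PadicInt.norm_p_pow]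
    calc (p : ℝ) ^ (-k : ℤ) = ((p : ℝ)⁻¹) ^ k := by
          rw [zpow_neg, zpow_natCast, inv_pow]
      _ < ε := hk
  rw [h, AddSubgroup.mem_bot] at hmem
  have : ‖(p : ℤ_[p]) ^ k‖ = 0 := by rw [hmem, norm_zero]
  rw [PadicInt.norm_p_pow] at this
  have hp0 : (0 : ℝ) < (p : ℝ) ^ (-k : ℤ) := zpow_pos (by linarith [one_lt_p p]) _
  linarith

/-- The point `⊥` of `S(ℤ_p)`. -/
noncomputable def sbot : ClosedAddSubgroupSpace p :=
  ⟨⊥, by rw [AddSubgroup.coe_bot]; exact isClosed_singleton⟩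

/-- The point `p^n ℤ_p` of `S(ℤ_p)`. -/
noncomputable def sK (n : ℕ) : ClosedAddSubgroupSpace p := ⟨Kgp p n, isClosed_Kgp p n⟩

lemma sK_injective : Function.Injective (sK p) := fun m n h =>
  Kgp_injective p (congrArg Subtype.val h)

lemma sbot_ne_sK (n : ℕ) : sbot p ≠ sK p n := fun h =>
  Kgp_ne_bot p n (congrArg Subtype.val h).symm

lemma cases_S (K : ClosedAddSubgroupSpace p) : K = sbot p ∨ ∃ n, K = sK p n := by
  by_cases h : K.1 = ⊥
  · left; exact Subtype.ext h
  · right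
    obtain ⟨n, hn⟩ := classify_closed p K.2 h
    exact ⟨n, Subtype.ext hn⟩

lemma isOpen_singleton_sK (n : ℕ) : IsOpen ({sK p n} : Set (ClosedAddSubgroupSpace p)) := by
  have : ({sK p n} : Set (ClosedAddSubgroupSpace p)) =
      {K : ClosedAddSubgroupSpace p | Kgp p (n + 1) ⊔ K.1 = Kgp p n} := by
    ext K
    simp only [Set.mem_singleton_iff, Set.mem_setOf_eq]
    constructor
    · rintro rfl
      show Kgp p (n + 1) ⊔ Kgp p n = Kgp p n
      rw [Kgp_sup_Kgp, min_eq_right (Nat.le_succ n)]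
    · intro hK
      rcases cases_S p K with rfl | ⟨m, rfl⟩
      · exfalso
        have : Kgp p (n + 1) ⊔ (⊥ : AddSubgroup ℤ_[p]) = Kgp p n := hK
        rw [sup_bot_eq] at this
        have := Kgp_injective p this
        omega
      · have : Kgp p (n + 1) ⊔ Kgp p m = Kgp p n := hK
        rw [Kgp_sup_Kgp] at this
        have hmn := Kgp_injective p this
        have : m = n := by omega
        rw [this]
  rw [this]
  exact TopologicalSpace.isOpen_generateFrom_of_mem
    ⟨Kgp p (n + 1), Kgp p n, isOpen_Kgp p _, isOpen_Kgp p _,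
      (Kgp_le_iff p).mpr (Nat.le_succ n), rfl⟩

lemma isOpen_tail_S (M : ℕ) :
    IsOpen ({sbot p} ∪ {K | ∃ m, M ≤ m ∧ K = sK p m} : Set (ClosedAddSubgroupSpace p)) := by
  have : ({sbot p} ∪ {K | ∃ m, M ≤ m ∧ K = sK p m} : Set (ClosedAddSubgroupSpace p)) =
      {K : ClosedAddSubgroupSpace p | Kgp p M ⊔ K.1 = Kgp p M} := by
    ext K
    simp only [Set.mem_union, Set.mem_singleton_iff, Set.mem_setOf_eq]
    constructor
    · rintro (rfl | ⟨m, hm, rfl⟩)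
      · show Kgp p M ⊔ (⊥ : AddSubgroup ℤ_[p]) = Kgp p M
        rw [sup_bot_eq]
      · show Kgp p M ⊔ Kgp p m = Kgp p M
        rw [Kgp_sup_Kgp, min_eq_left hm]
    · intro hK
      rcases cases_S p K with rfl | ⟨m, rfl⟩
      · exact Or.inl rfl
      · right
        refine ⟨m, ?_, rfl⟩
        have : Kgp p M ⊔ Kgp p m = Kgp p M := hK
        rw [Kgp_sup_Kgp] at this
        have := Kgp_injective p this
        omega
  rw [this]
  exact TopologicalSpace.isOpen_generateFrom_of_mem
    ⟨Kgp p M, Kgp p M, isOpen_Kgp p _, isOpen_Kgp p _, le_rfl, rfl⟩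

/-- Characterization of open sets in `S(ℤ_p)`. -/
lemma charS (U : Set (ClosedAddSubgroupSpace p)) :
    IsOpen U ↔ (sbot p ∈ U → ∃ M, ∀ m, M ≤ m → sK p m ∈ U) := by
  constructor
  · intro hU
    have hgen : TopologicalSpace.GenerateOpen
        {s | ∃ N J : AddSubgroup ℤ_[p], IsOpen (N : Set ℤ_[p]) ∧ IsOpen (J : Set ℤ_[p]) ∧ N ≤ J ∧
          s = {K : ClosedAddSubgroupSpace p | N ⊔ K.1 = J}} U := hU
    clear hU
    induction hgen with
    | basic s hs =>
      obtain ⟨N, J, hNo, hJo, hNJ, rfl⟩ := hs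
      obtain ⟨k, rfl⟩ := classify_open p hNo
      obtain ⟨j, rfl⟩ := classify_open p hJo
      have hjk : j ≤ k := (Kgp_le_iff p).mp hNJ
      intro hbot
      have hb : Kgp p k ⊔ (⊥ : AddSubgroup ℤ_[p]) = Kgp p j := hbot
      rw [sup_bot_eq] at hb
      have hkj : k = j := Kgp_injective p hb
      refine ⟨k, fun m hm => ?_⟩
      show Kgp p k ⊔ Kgp p m = Kgp p j
      rw [Kgp_sup_Kgp, min_eq_left hm, hkj]
    | univ => exact fun _ => ⟨0, fun m _ => trivial⟩
    | inter s t _ _ ihs iht =>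
      intro ⟨hs, ht⟩
      obtain ⟨M1, h1⟩ := ihs hs
      obtain ⟨M2, h2⟩ := iht ht
      exact ⟨max M1 M2, fun m hm =>
        ⟨h1 m (le_trans (le_max_left _ _) hm), h2 m (le_trans (le_max_right _ _) hm)⟩⟩
    | sUnion S _ ih =>
      intro hbot
      obtain ⟨s, hsS, hbs⟩ := hbot
      obtain ⟨M, hM⟩ := ih s hsS hbs
      exact ⟨M, fun m hm => ⟨s, hsS, hM m hm⟩⟩
  · intro h
    rw [isOpen_iff_forall_mem_open]
    intro K hK
    rcases cases_S p K with rfl | ⟨n, rfl⟩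
    · obtain ⟨M, hM⟩ := h hK
      refine ⟨{sbot p} ∪ {K | ∃ m, M ≤ m ∧ K = sK p m}, ?_, isOpen_tail_S p M, Or.inl rfl⟩
      rintro x (rfl | ⟨m, hm, rfl⟩)
      · exact hK
      · exact hM m hm
    · exact ⟨{sK p n}, by simpa using hK, isOpen_singleton_sK p n, rfl⟩

/-! ### The `P` side -/

/-- The point `0` of `P`. -/
noncomputable def z0 : Pspace := ⟨0, Or.inr rfl⟩

/-- The point `1/(n+1)` of `P`. -/
noncomputable def zn (n : ℕ) : Pspace :=
  ⟨1 / ((n : ℝ) + 1), Or.inl ⟨n + 1, Nat.le_add_left 1 n, by push_cast; ring⟩⟩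

lemma zn_pos (n : ℕ) : (0 : ℝ) < (zn n : ℝ) := by
  show (0 : ℝ) < 1 / ((n : ℝ) + 1)
  positivity

lemma zn_val (n : ℕ) : (zn n : ℝ) = 1 / ((n : ℝ) + 1) := rfl

lemma zn_injective : Function.Injective zn := by
  intro m n h
  have h' : (1 : ℝ) / ((m : ℝ) + 1) = 1 / ((n : ℝ) + 1) := congrArg Subtype.val h
  have hm : ((m : ℝ) + 1) ≠ 0 := by positivity
  have hn : ((n : ℝ) + 1) ≠ 0 := by positivity
  field_simp at h'
  exact_mod_cast (by linarith : (m : ℝ) = n)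

lemma z0_ne_zn (n : ℕ) : z0 ≠ zn n := by
  intro h
  have := zn_pos n
  rw [← congrArg Subtype.val h] at this
  exact lt_irrefl _ this

lemma cases_P (x : Pspace) : x = z0 ∨ ∃ n, x = zn n := by
  rcases x.2 with ⟨n, hn, hx⟩ | hx
  · right
    obtain ⟨m, rfl⟩ := Nat.exists_eq_add_of_le hn
    refine ⟨m, Subtype.ext ?_⟩
    rw [hx, zn_val]
    push_cast
    ring_nf
  · left; exact Subtype.ext hx

lemma one_div_lt_one_div_iff' {a b : ℝ} (ha : 0 < a) (hb : 0 < b) :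
    1 / a < 1 / b ↔ b < a := by
  rw [div_lt_div_iff₀ ha hb, one_mul, one_mul]

lemma isOpen_singleton_zn (n : ℕ) : IsOpen ({zn n} : Set Pspace) := by
  rcases n with _ | n
  · have : ({zn 0} : Set Pspace) = Subtype.val ⁻¹' Set.Ioi (1/2 : ℝ) := by
      ext x
      simp only [Set.mem_singleton_iff, Set.mem_preimage, Set.mem_Ioi]
      constructor
      · rintro rfl
        show (1/2 : ℝ) < 1 / ((0 : ℕ) + 1 : ℝ)
        norm_num
      · intro hx
        rcases cases_P x with rfl | ⟨m, rfl⟩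
        · exfalso; revert hx; show ¬ ((1/2 : ℝ) < 0); norm_num
        · have hv : (1/2 : ℝ) < 1 / ((m : ℝ) + 1) := hx
          have : ((m : ℝ) + 1) < 2 :=
            (one_div_lt_one_div_iff' (by norm_num : (0:ℝ) < 2) (by positivity)).mp hv
          have hm : m = 0 := by
            by_contra hm
            have : (1 : ℝ) ≤ (m : ℝ) := by exact_mod_cast Nat.one_le_iff_ne_zero.mpr hm
            linarith
          rw [hm]
    rw [this]
    exact (isOpen_Ioi).preimage continuous_subtype_val
  · have : ({zn (n+1)} : Set Pspace) =
        Subtype.val ⁻¹' Set.Ioo (1 / ((n : ℝ) + 3)) (1 / ((n : ℝ) + 1)) := by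
      ext x
      simp only [Set.mem_singleton_iff, Set.mem_preimage, Set.mem_Ioo]
      constructor
      · rintro rfl
        constructor
        · show (1 / ((n : ℝ) + 3) : ℝ) < 1 / (((n : ℕ) + 1 : ℕ) + 1 : ℝ)
          rw [one_div_lt_one_div_iff' (by positivity) (by positivity)]
          push_cast; linarith
        · show (1 / (((n : ℕ) + 1 : ℕ) + 1 : ℝ) : ℝ) < 1 / ((n : ℝ) + 1)
          rw [one_div_lt_one_div_iff' (by positivity) (by positivity)]
          push_cast; linarith
      · rintro ⟨h1, h2⟩
        rcases cases_P x with rfl | ⟨m, rfl⟩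
        · exfalso
          have : (1 / ((n : ℝ) + 3) : ℝ) < 0 := h1
          have h3 : (0 : ℝ) < 1 / ((n : ℝ) + 3) := by positivity
          linarith
        · have hv1 : (1 / ((n : ℝ) + 3) : ℝ) < 1 / ((m : ℝ) + 1) := h1
          have hv2 : (1 / ((m : ℝ) + 1) : ℝ) < 1 / ((n : ℝ) + 1) := h2
          rw [one_div_lt_one_div_iff' (by positivity) (by positivity)] at hv1 hv2
          have hm1 : (n : ℝ) + 1 < (m : ℝ) + 1 := by linarith
          have hm2 : (m : ℝ) + 1 < (n : ℝ) + 3 := by linarith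
          have hm1' : n < m := by exact_mod_cast (by linarith : (n : ℝ) < m)
          have hm2' : m < n + 2 := by exact_mod_cast (by linarith : (m : ℝ) < n + 2)
          have : m = n + 1 := by omega
          rw [this]
    rw [this]
    exact (isOpen_Ioo).preimage continuous_subtype_val

/-- Characterization of open sets in `P`. -/
lemma charP (V : Set Pspace) :
    IsOpen V ↔ (z0 ∈ V → ∃ M, ∀ m, M ≤ m → zn m ∈ V) := by
  constructor
  · intro hV hz0
    obtain ⟨W, hW, rfl⟩ := isOpen_induced_iff.mp hV
    have h0W : (0 : ℝ) ∈ W := hz0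
    obtain ⟨ε, hε, hball⟩ := Metric.isOpen_iff.mp hW 0 h0W
    obtain ⟨M, hM⟩ := exists_nat_one_div_lt hε
    refine ⟨M, fun m hm => ?_⟩
    show (zn m : ℝ) ∈ W
    apply hball
    rw [Metric.mem_ball, dist_zero_right, Real.norm_eq_abs, abs_of_pos (zn_pos m)]
    calc (zn m : ℝ) = 1 / ((m : ℝ) + 1) := rfl
      _ ≤ 1 / ((M : ℝ) + 1) := by
          apply div_le_div_of_nonneg_left (by norm_num) (by positivity)
          exact_mod_cast Nat.add_le_add_right hm 1
      _ < ε := hM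
  · intro h
    rw [isOpen_iff_forall_mem_open]
    intro x hx
    rcases cases_P x with rfl | ⟨n, rfl⟩
    · obtain ⟨M, hM⟩ := h hx
      refine ⟨Subtype.val ⁻¹' Set.Iio (1 / ((M : ℝ) + 1)), ?_, 
        (isOpen_Iio).preimage continuous_subtype_val, ?_⟩
      · intro y hy
        rcases cases_P y with rfl | ⟨m, rfl⟩
        · exact hx
        · have hv : (1 / ((m : ℝ) + 1) : ℝ) < 1 / ((M : ℝ) + 1) := hy
          rw [one_div_lt_one_div_iff' (by positivity) (by positivity)] at hv
          have : M < m := by exact_mod_cast (by linarith : (M : ℝ) < m)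
          exact hM m this.le
      · show (0 : ℝ) ∈ Set.Iio (1 / ((M : ℝ) + 1))
        simp only [Set.mem_Iio]
        positivity
    · exact ⟨{zn n}, by simpa using hx, isOpen_singleton_zn n, rfl⟩

open Classical in
/-- The bijection. -/
noncomputable def f (K : ClosedAddSubgroupSpace p) : Pspace :=
  if h : K.1 = ⊥ then z0 else zn (Classical.choose (classify_closed p K.2 h))

lemma f_sbot : f p (sbot p) = z0 := by
  simp only [f]
  exact dif_pos rfl

lemma f_sK (n : ℕ) : f p (sK p n) = zn n := by
  have h : (sK p n).1 ≠ ⊥ := Kgp_ne_bot p n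
  simp only [f]
  rw [dif_neg h]
  congr 1
  have hspec := Classical.choose_spec (classify_closed p (sK p n).2 h)
  exact (Kgp_injective p hspec.symm)

lemma f_bijective : Function.Bijective (f p) := by
  constructor
  · intro K L h
    rcases cases_S p K with rfl | ⟨n, rfl⟩ <;> rcases cases_S p L with rfl | ⟨m, rfl⟩
    · rfl
    · rw [f_sbot, f_sK] at h; exact absurd h (z0_ne_zn m)
    · rw [f_sbot, f_sK] at h; exact absurd h.symm (z0_ne_zn n)
    · rw [f_sK, f_sK] at h; rw [zn_injective h]
  · intro x
    rcases cases_P x with rfl | ⟨n, rfl⟩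
    · exact ⟨sbot p, f_sbot p⟩
    · exact ⟨sK p n, f_sK p n⟩

/-- The equiv. -/
noncomputable def e : ClosedAddSubgroupSpace p ≃ Pspace :=
  Equiv.ofBijective (f p) (f_bijective p)

lemma e_sbot : e p (sbot p) = z0 := f_sbot p
lemma e_sK (n : ℕ) : e p (sK p n) = zn n := f_sK p n

lemma cont_e : Continuous (e p) := by
  rw [continuous_def]
  intro V hV
  rw [charS]
  intro hbot
  have hz0 : z0 ∈ V := by rwa [Set.mem_preimage, e_sbot] at hbot
  obtain ⟨M, hM⟩ := (charP V).mp hV hz0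
  refine ⟨M, fun m hm => ?_⟩
  rw [Set.mem_preimage, e_sK]
  exact hM m hm

lemma cont_e_symm : Continuous (e p).symm := by
  rw [continuous_def]
  intro U hU
  have himg : (e p).symm ⁻¹' U = (e p) '' U := by
    ext x
    rw [Set.mem_preimage, Set.mem_image_equiv]
  rw [himg, charP]
  intro hz0
  have hbot : sbot p ∈ U := by
    obtain ⟨K, hK, hKe⟩ := hz0
    have : K = sbot p := by
      rcases cases_S p K with rfl | ⟨n, rfl⟩
      · rfl
      · rw [e_sK] at hKe; exact absurd hKe.symm (z0_ne_zn n)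
    rwa [← this]
  obtain ⟨M, hM⟩ := (charS p U).mp hU hbot
  exact ⟨M, fun m hm => ⟨sK p m, hM m hm, e_sK p m⟩⟩

end Statement12Aux

open Statement12Aux in
/-- The space of closed subgroups of `ℤ_p` is homeomorphic to
`P = {1/n : n ∈ ℕ, n ≥ 1} ∪ {0} ⊆ ℝ`. -/
theorem statement12 : Nonempty (ClosedAddSubgroupSpace p ≃ₜ Pspace) :=
  ⟨{ toEquiv := e p, continuous_toFun := cont_e p, continuous_invFun := cont_e_symm p }⟩
end

section
/- Let X and Y be Hausdorff topological spaces and let i ∈ ℕ. Then the i-fold iterated derived set of the product space satisfies (X × Y)^(i) = ⋃_{p+q=i} X^(p) × Y^(q), the union being over all pairs of natural numbers p, q with p + q = i. -/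
open Filter Topology Set

lemma derivedSet_empty' {X : Type*} [TopologicalSpace X] : derivedSet (∅ : Set X) = ∅ := by
  ext x
  simp [derivedSet, AccPt]

lemma derivedSet_biUnion_finset {X ι : Type*} [TopologicalSpace X] (F : Finset ι)
    (f : ι → Set X) : derivedSet (⋃ j ∈ F, f j) = ⋃ j ∈ F, derivedSet (f j) := by
  classical
  induction F using Finset.induction_on with
  | empty => simp [derivedSet_empty']
  | insert _ _ h ih => simp [Set.biUnion_insert, derivedSet_union, ih]

lemma derivedSet_prod {X Y : Type*} [TopologicalSpace X] [TopologicalSpace Y]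
    (s : Set X) (t : Set Y) :
    derivedSet (s ×ˢ t) =
      (derivedSet s ×ˢ closure t) ∪ (closure s ×ˢ derivedSet t) := by
  ext ⟨x, y⟩
  constructor
  · intro h
    rw [mem_derivedSet] at h
    have hc : (x, y) ∈ closure (s ×ˢ t) := mem_closure_iff_clusterPt.mpr h.clusterPt
    rw [closure_prod_eq] at hc
    by_cases hx : AccPt x (𝓟 s)
    · exact Or.inl ⟨hx, hc.2⟩
    · right
      refine ⟨hc.1, ?_⟩
      rw [mem_derivedSet, accPt_iff_nhds]
      rw [accPt_iff_nhds] at hx h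
      push_neg at hx
      obtain ⟨U, hU, hUx⟩ := hx
      intro V hV
      obtain ⟨⟨a, b⟩, ⟨hab1, hab2⟩, hne⟩ := h (U ×ˢ V) (prod_mem_nhds hU hV)
      have ha : a = x := hUx a ⟨hab1.1, hab2.1⟩
      refine ⟨b, ⟨hab1.2, hab2.2⟩, ?_⟩
      intro hb
      exact hne (by rw [ha, hb])
  · rintro (⟨hx, hy⟩ | ⟨hx, hy⟩)
    · rw [mem_derivedSet, accPt_iff_nhds] at hx ⊢
      intro U hU
      obtain ⟨V, W, hVo, hxV, hWo, hyW, hVW⟩ := mem_nhds_prod_iff'.mp hU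
      obtain ⟨a, ha, hax⟩ := hx V (hVo.mem_nhds hxV)
      obtain ⟨b, hb⟩ := mem_closure_iff_nhds.mp hy W (hWo.mem_nhds hyW)
      exact ⟨(a, b), ⟨hVW ⟨ha.1, hb.1⟩, ⟨ha.2, hb.2⟩⟩,
        fun h => hax (congrArg Prod.fst h)⟩
    · rw [mem_derivedSet, accPt_iff_nhds] at hy ⊢
      intro U hU
      obtain ⟨V, W, hVo, hxV, hWo, hyW, hVW⟩ := mem_nhds_prod_iff'.mp hU
      obtain ⟨a, ha⟩ := mem_closure_iff_nhds.mp hx V (hVo.mem_nhds hxV)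
      obtain ⟨b, hb, hby⟩ := hy W (hWo.mem_nhds hyW)
      exact ⟨(a, b), ⟨hVW ⟨ha.1, hb.1⟩, ⟨ha.2, hb.2⟩⟩,
        fun h => hby (congrArg Prod.snd h)⟩

lemma isClosed_iter_derivedSet {X : Type*} [TopologicalSpace X] [T1Space X] (p : ℕ) :
    IsClosed (derivedSet^[p] (Set.univ : Set X)) := by
  cases p with
  | zero => simp only [Function.iterate_zero, id]; exact isClosed_univ
  | succ n => rw [Function.iterate_succ_apply']; exact isClosed_derivedSet _

/-- For Hausdorff spaces `X` and `Y` and `i : ℕ`, the `i`-fold iterated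
derived set of `X × Y` is the union over `p + q = i` of the products
`X^(p) × Y^(q)` of iterated derived sets. -/
theorem statement13 (X Y : Type*) [TopologicalSpace X] [TopologicalSpace Y]
    [T2Space X] [T2Space Y] (i : ℕ) :
    derivedSet^[i] (Set.univ : Set (X × Y)) =
      ⋃ (p : ℕ) (q : ℕ) (_ : p + q = i),
        (derivedSet^[p] (Set.univ : Set X)) ×ˢ (derivedSet^[q] (Set.univ : Set Y)) := by
  set A : ℕ → Set X := fun p => derivedSet^[p] Set.univ with hA
  set B : ℕ → Set Y := fun q => derivedSet^[q] Set.univ with hB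
  have hfin : ∀ j : ℕ, (⋃ (p : ℕ) (q : ℕ) (_ : p + q = j), A p ×ˢ B q) =
      ⋃ p ∈ Finset.range (j + 1), A p ×ˢ B (j - p) := by
    intro j
    ext z
    simp only [Set.mem_iUnion, Finset.mem_range]
    constructor
    · rintro ⟨p, q, hpq, hz⟩
      exact ⟨p, by omega, by rwa [show j - p = q by omega]⟩
    · rintro ⟨p, hp, hz⟩
      exact ⟨p, j - p, by omega, hz⟩
  induction i with
  | zero =>
    ext z
    simp only [Function.iterate_zero, id, Set.mem_univ, true_iff, Set.mem_iUnion]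
    exact ⟨0, 0, rfl, by simp [hA, hB]⟩
  | succ n ih =>
    rw [Function.iterate_succ_apply', ih, hfin n, derivedSet_biUnion_finset]
    have hAs : ∀ p, derivedSet (A p) = A (p + 1) := fun p =>
      (Function.iterate_succ_apply' derivedSet p Set.univ).symm
    have hBs : ∀ q, derivedSet (B q) = B (q + 1) := fun q =>
      (Function.iterate_succ_apply' derivedSet q Set.univ).symm
    have hclA : ∀ p, closure (A p) = A p := fun p => (isClosed_iter_derivedSet p).closure_eq
    have hclB : ∀ q, closure (B q) = B q := fun q => (isClosed_iter_derivedSet q).closure_eq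
    rw [hfin (n + 1)]
    ext z
    simp only [Set.mem_iUnion, Finset.mem_range, derivedSet_prod, hAs, hBs, hclA, hclB,
      Set.mem_union]
    constructor
    · rintro ⟨p, hp, hz | hz⟩
      · exact ⟨p + 1, by omega, by rwa [show n + 1 - (p + 1) = n - p by omega]⟩
      · exact ⟨p, by omega, by rwa [show n + 1 - p = n - p + 1 by omega]⟩
    · rintro ⟨p, hp, hz⟩
      rcases Nat.eq_zero_or_pos p with rfl | hpos
      · exact ⟨0, by omega, Or.inr (by simpa using hz)⟩
      · refine ⟨p - 1, by omega, Or.inl ?_⟩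
        rw [show p - 1 + 1 = p by omega, show n - (p - 1) = n + 1 - p by omega]
        exact hz
end

section
/- Let X be a Hausdorff topological space and let x ∈ X be a point of Cantor–Bendixson height exactly k for some k > 0, i.e. x ∈ X^(k) and x ∉ X^(k+1). Then for every open neighbourhood U of x and every natural number j ≤ k, there exists a point y ∈ U of Cantor–Bendixson height exactly j, i.e. y ∈ X^(j) and y ∉ X^(j+1). -/
lemma step15 {X : Type*} [TopologicalSpace X] (m : ℕ) (z : X)
    (hz₁ : z ∈ derivedSet^[m + 1] (Set.univ : Set X))
    (hz₂ : z ∉ derivedSet^[m + 2] (Set.univ : Set X))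
    (U : Set X) (hU : IsOpen U) (hzU : z ∈ U) :
    ∃ y ∈ U, y ∈ derivedSet^[m] (Set.univ : Set X) ∧
      y ∉ derivedSet^[m + 1] (Set.univ : Set X) := by
  rw [Function.iterate_succ_apply', mem_derivedSet, accPt_iff_nhds] at hz₁
  rw [show m + 2 = (m + 1) + 1 from rfl, Function.iterate_succ_apply', mem_derivedSet,
    accPt_iff_nhds] at hz₂
  push_neg at hz₂
  obtain ⟨V, hV, hVz⟩ := hz₂
  obtain ⟨y, ⟨⟨hyU, hyV⟩, hym⟩, hyz⟩ := hz₁ (U ∩ V) (Filter.inter_mem (hU.mem_nhds hzU) hV)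
  exact ⟨y, hyU, hym, fun h => hyz (hVz y ⟨hyV, h⟩)⟩

lemma aux15 {X : Type*} [TopologicalSpace X] (j d : ℕ) (z : X)
    (hz₁ : z ∈ derivedSet^[j + d] (Set.univ : Set X))
    (hz₂ : z ∉ derivedSet^[j + d + 1] (Set.univ : Set X))
    (U : Set X) (hU : IsOpen U) (hzU : z ∈ U) :
    ∃ y ∈ U, y ∈ derivedSet^[j] (Set.univ : Set X) ∧
      y ∉ derivedSet^[j + 1] (Set.univ : Set X) := by
  induction d generalizing z with
  | zero => exact ⟨z, hzU, hz₁, hz₂⟩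
  | succ d ih =>
    obtain ⟨y, hyU, hy₁, hy₂⟩ := step15 (j + d) z (by rwa [show j + d + 1 = j + (d + 1) by omega])
      (by rwa [show j + d + 2 = j + (d + 1) + 1 by omega]) U hU hzU
    exact ih y hy₁ hy₂ hyU

/-- Let `X` be Hausdorff and `x ∈ X` a point of Cantor–Bendixson height
exactly `k > 0`.  Then every open neighbourhood `U` of `x` contains, for every `j ≤ k`, a
point of Cantor–Bendixson height exactly `j`. -/
theorem statement15 (X : Type*) [TopologicalSpace X] [T2Space X] (k : ℕ) (hk : 0 < k)
    (x : X) (hx₁ : x ∈ derivedSet^[k] (Set.univ : Set X))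
    (hx₂ : x ∉ derivedSet^[k + 1] (Set.univ : Set X))
    (U : Set X) (hU : IsOpen U) (hxU : x ∈ U) (j : ℕ) (hj : j ≤ k) :
    ∃ y ∈ U, y ∈ derivedSet^[j] (Set.univ : Set X) ∧
      y ∉ derivedSet^[j + 1] (Set.univ : Set X) := by
  exact aux15 j (k - j) x (by rwa [show j + (k - j) = k by omega])
    (by rwa [show j + (k - j) + 1 = k + 1 by omega]) U hU hxU
end
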